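/- Let 0 < τ < √2, α = 1 − τ²/2, β = √(τ² − τ⁴/4), and I(η) = Pr_{X,Y ~ N(0,1), independent}[X ≥ η and αX + βY ≥ η]. Define Ω(η) = 2·Φ_c(η)·Φ_c((1−α)η/β) − I(η) − ((1−α)/β)·e^{(α(1−α)/β²)·η²}·Φ_c(η)². Then Ω′(η) = −(2α(1−α)²/β³)·e^{(α(1−α)/β²)·η²}·Φ_c(η)²·η ≤ 0 for all η ≥ 0, lim_{η → ∞} Ω(η) = 0, and consequently Ω(η) ≥ 0 for all η ≥ 0. -/

import Mathlib

open MeasureTheory ProbabilityTheory Real Filter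

noncomputable section

/-- `Φ_c(η) = Pr_{X ~ N(0,1)}[X ≥ η]`. -/
def gaussTail (η : ℝ) : ℝ := (gaussianReal 0 1 (Set.Ici η)).toReal

/-- `I(η) = Pr[X ≥ η ∧ αX + βY ≥ η]` for independent standard Gaussians `X, Y`. -/
def jointTail (α β η : ℝ) : ℝ :=
  (((gaussianReal 0 1).prod (gaussianReal 0 1))
      {z : ℝ × ℝ | η ≤ z.1 ∧ η ≤ α * z.1 + β * z.2}).toReal

/-- `Ω(η) = 2 Φ_c(η) Φ_c((1-α)η/β) - I(η) - ((1-α)/β) e^{(α(1-α)/β²)η²} Φ_c(η)²`. -/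
def OmegaFn (α β η : ℝ) : ℝ :=
  2 * gaussTail η * gaussTail ((1 - α) * η / β) - jointTail α β η
    - (1 - α) / β * Real.exp (α * (1 - α) / β ^ 2 * η ^ 2) * (gaussTail η) ^ 2

/-!
Fubini gives `I(η) = ∫_{x > η} φ(x) Φ_c((η - αx)/β) dx`. After shifting to the fixed domain
`x - η > 0`, differentiation under the integral sign followed by an integration by parts in the
shifted variable yields `I'(η) = -2 φ(η) Φ_c((1-α)η/β)`. Completing the square (this is where
`α² + β² = 1` enters) turns each product of two Gaussian densities into a single one, and `Ω'`
collapses to the closed form. Since `Ω' ≤ 0` on `[0, ∞)` and every term of `Ω` vanishes at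
infinity (the last one because `Φ_c(η) ≤ e^{-η²/2}` beats `e^{α(1-α)η²/β²} = e^{αη²/(1+α)}`),
`Ω` decreases to `0` and is therefore nonnegative.
-/

open Set Topology

local notation "φ" => gaussianPDFReal 0 1

lemma le_of_hasDerivAt_nonpos_of_tendsto {f f' : ℝ → ℝ} {a l : ℝ}
    (hf : ∀ x, a ≤ x → HasDerivAt f (f' x) x) (hf' : ∀ x, a ≤ x → f' x ≤ 0)
    (hlim : Tendsto f atTop (𝓝 l)) : l ≤ f a := by
  have hanti : AntitoneOn f (Ici a) := by
    refine antitoneOn_of_hasDerivWithinAt_nonpos (f' := f') (convex_Ici a)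
      (fun x hx ↦ (hf x hx).continuousAt.continuousWithinAt) (fun x hx ↦ ?_) fun x hx ↦ ?_
    · rw [interior_Ici] at hx
      exact (hf x (le_of_lt hx)).hasDerivWithinAt
    · rw [interior_Ici] at hx
      exact hf' x (le_of_lt hx)
  exact le_of_tendsto hlim (eventually_atTop.2 ⟨a, fun x hx ↦ hanti self_mem_Ici hx hx⟩)

lemma setIntegral_Ioi_comp_add_right {E : Type*} [NormedAddCommGroup E] [NormedSpace ℝ E]
    (f : ℝ → E) (a c : ℝ) : ∫ x in Ioi a, f (x + c) = ∫ x in Ioi (a + c), f x := by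
  have h := (measurePreserving_add_right volume c).setIntegral_preimage_emb
    (measurableEmbedding_addRight c) f (Ioi (a + c))
  rwa [preimage_add_const_Ioi, add_sub_cancel_right] at h

lemma gaussianPDFReal_zero_one : φ = fun x ↦ (√(2 * π))⁻¹ * exp (-x ^ 2 / 2) := by
  ext x
  simp [gaussianPDFReal]

lemma gaussianPDFReal_zero_one_le_exp (x : ℝ) : φ x ≤ exp (-x ^ 2 / 2) := by
  have h : 1 ≤ √(2 * π) := by
    rw [Real.one_le_sqrt]
    nlinarith [pi_gt_three]
  rw [gaussianPDFReal_zero_one]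
  exact mul_le_of_le_one_left (exp_nonneg _) (inv_le_one_of_one_le₀ h)

lemma continuous_gaussianPDFReal_zero_one : Continuous φ := by
  rw [gaussianPDFReal_zero_one]
  fun_prop

lemma hasDerivAt_gaussianPDFReal_zero_one (x : ℝ) : HasDerivAt φ (-x * φ x) x := by
  rw [gaussianPDFReal_zero_one]
  have h : HasDerivAt (fun y : ℝ ↦ -y ^ 2 / 2) (-x) x := by
    simpa [neg_div] using ((hasDerivAt_pow 2 x).div_const 2).fun_neg
  exact (h.exp.const_mul _).congr_deriv (by ring)

lemma tendsto_gaussianPDFReal_zero_one_atTop : Tendsto φ atTop (𝓝 0) := by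
  refine squeeze_zero (gaussianPDFReal_nonneg 0 1) gaussianPDFReal_zero_one_le_exp ?_
  exact tendsto_exp_atBot.comp <| (tendsto_neg_atTop_atBot.comp
    (tendsto_pow_atTop two_ne_zero)).atBot_div_const two_pos

lemma gaussTail_eq_integral (η : ℝ) : gaussTail η = ∫ x in Ioi η, φ x := by
  rw [gaussTail, gaussianReal_apply_eq_integral 0 one_ne_zero,
    ENNReal.toReal_ofReal (integral_nonneg (gaussianPDFReal_nonneg 0 1)),
    integral_Ici_eq_integral_Ioi]

lemma gaussTail_nonneg (η : ℝ) : 0 ≤ gaussTail η := ENNReal.toReal_nonneg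

lemma gaussTail_le_one (η : ℝ) : gaussTail η ≤ 1 := measureReal_le_one

lemma hasDerivAt_gaussTail (η : ℝ) : HasDerivAt gaussTail (-φ η) η := by
  have h : gaussTail = fun b ↦ gaussTail 0 - ∫ x in 0..b, φ x := by
    ext b
    rw [gaussTail_eq_integral, gaussTail_eq_integral, ← intervalIntegral.integral_Ioi_sub_Ioi'
      (integrable_gaussianPDFReal 0 1).integrableOn (integrable_gaussianPDFReal 0 1).integrableOn]
    ring
  rw [h]
  exact ((continuous_gaussianPDFReal_zero_one.integral_hasStrictDerivAt 0 η).hasDerivAt).const_sub _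

lemma continuous_gaussTail : Continuous gaussTail :=
  continuous_iff_continuousAt.2 fun η ↦ (hasDerivAt_gaussTail η).continuousAt

lemma gaussTail_le_exp {η : ℝ} (hη : 0 ≤ η) : gaussTail η ≤ exp (-η ^ 2 / 2) := by
  have h := measure_ge_le_exp_mul_mgf (μ := gaussianReal 0 1) (X := id) η hη
    (integrable_exp_mul_gaussianReal η)
  rw [mgf_id_gaussianReal, ← exp_add] at h
  calc gaussTail η = (gaussianReal 0 1).real {x | η ≤ id x} := rfl
    _ ≤ _ := h
    _ = exp (-η ^ 2 / 2) := by
      congr 1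
      push_cast
      ring

lemma tendsto_gaussTail_atTop : Tendsto gaussTail atTop (𝓝 0) := by
  refine squeeze_zero' (.of_forall gaussTail_nonneg)
    (eventually_atTop.2 ⟨0, fun η hη ↦ gaussTail_le_exp hη⟩) ?_
  exact tendsto_exp_atBot.comp <| (tendsto_neg_atTop_atBot.comp
    (tendsto_pow_atTop two_ne_zero)).atBot_div_const two_pos

lemma abs_mul_exp_neg_sq_div_two_le (x : ℝ) : |x| * exp (-x ^ 2 / 2) ≤ exp (-x ^ 2 / 4) := by
  have hx : |x| ≤ exp (x ^ 2 / 4) := by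
    nlinarith [add_one_le_exp (x ^ 2 / 4), sq_nonneg (|x| - 2), sq_abs x]
  calc |x| * exp (-x ^ 2 / 2) ≤ exp (x ^ 2 / 4) * exp (-x ^ 2 / 2) := by gcongr
    _ = exp (-x ^ 2 / 4) := by rw [← exp_add]; congr 1; ring

lemma exp_neg_add_sq_div_four_le (u t : ℝ) :
    exp (-(u + t) ^ 2 / 4) ≤ exp (t ^ 2 / 4) * exp (-u ^ 2 / 8) := by
  rw [← exp_add, exp_le_exp]
  nlinarith [sq_nonneg (u + 2 * t)]

lemma HasDerivAt.gaussianPDFReal_mul_gaussTail {f g : ℝ → ℝ} {f' g' x : ℝ}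
    (hf : HasDerivAt f f' x) (hg : HasDerivAt g g' x) :
    HasDerivAt (fun s ↦ φ (f s) * gaussTail (g s))
      (-f x * φ (f x) * f' * gaussTail (g x) - φ (f x) * φ (g x) * g') x :=
  (((hasDerivAt_gaussianPDFReal_zero_one (f x)).comp x hf).mul
    ((hasDerivAt_gaussTail (g x)).comp x hg)).congr_deriv (by simp only [Function.comp_apply]; ring)

section

variable {α β : ℝ}

lemma gaussianPDFReal_mul_gaussianPDFReal (hβ : β ≠ 0) (hαβ : α ^ 2 + β ^ 2 = 1) (η u : ℝ) :
    φ (u + η) * φ (((1 - α) * η - α * u) / β) = φ η * φ ((u + (1 - α) * η) / β) := by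
  simp only [gaussianPDFReal_zero_one]
  rw [mul_mul_mul_comm, ← exp_add, mul_mul_mul_comm, ← exp_add]
  congr 2
  field_simp
  linear_combination (-(2 * u * η) - u ^ 2) * hαβ

lemma exp_mul_gaussianPDFReal (hβ : β ≠ 0) (hαβ : α ^ 2 + β ^ 2 = 1) (η : ℝ) :
    exp (α * (1 - α) / β ^ 2 * η ^ 2) * φ η = φ ((1 - α) * η / β) := by
  simp only [gaussianPDFReal_zero_one]
  rw [mul_left_comm, ← exp_add]
  congr 2
  field_simp
  linear_combination (-η ^ 2) * hαβ

lemma setIntegral_Ioi_gaussianPDFReal_div (hβ : 0 < β) (m : ℝ) :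
    ∫ u in Ioi 0, φ ((u + m) / β) = β * gaussTail (m / β) := by
  rw [setIntegral_Ioi_comp_add_right (fun x ↦ φ (x / β)), zero_add]
  simp_rw [div_eq_mul_inv]
  rw [integral_comp_mul_right_Ioi _ _ (inv_pos.2 hβ), inv_inv, smul_eq_mul, gaussTail_eq_integral]

lemma gaussianReal_preimage_prodMk (hβ : 0 < β) (η x : ℝ) :
    (gaussianReal 0 1 (Prod.mk x ⁻¹' {z : ℝ × ℝ | η ≤ z.1 ∧ η ≤ α * z.1 + β * z.2})).toReal
      = (Ici η).indicator (fun x ↦ gaussTail ((η - α * x) / β)) x := by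
  by_cases hx : η ≤ x
  · have h : Prod.mk x ⁻¹' {z : ℝ × ℝ | η ≤ z.1 ∧ η ≤ α * z.1 + β * z.2}
        = Ici ((η - α * x) / β) := by
      ext y
      simp only [mem_preimage, mem_ofPred_eq, mem_Ici, hx, true_and, div_le_iff₀ hβ]
      constructor <;> intro h <;> linarith
    rw [h, indicator_of_mem (mem_Ici.2 hx)]
    rfl
  · have h : Prod.mk x ⁻¹' {z : ℝ × ℝ | η ≤ z.1 ∧ η ≤ α * z.1 + β * z.2} = ∅ := by
      ext y
      simp [hx]
    simp [h, indicator_of_notMem (notMem_Ici.2 (not_le.1 hx))]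

lemma jointTail_eq_integral (hβ : 0 < β) (η : ℝ) :
    jointTail α β η = ∫ x in Ioi η, φ x * gaussTail ((η - α * x) / β) := by
  have hS : MeasurableSet {z : ℝ × ℝ | η ≤ z.1 ∧ η ≤ α * z.1 + β * z.2} :=
    (measurableSet_le measurable_const measurable_fst).inter
      (measurableSet_le measurable_const
        ((measurable_fst.const_mul α).add (measurable_snd.const_mul β)))
  rw [jointTail, Measure.prod_apply hS, ← integral_toReal
    (measurable_measure_prodMk_left hS).aemeasurable (ae_of_all _ fun _ ↦ measure_lt_top _ _)]
  simp_rw [gaussianReal_preimage_prodMk hβ, integral_gaussianReal_eq_integral_smul one_ne_zero,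
    smul_eq_mul, ← indicator_mul_right]
  rw [integral_indicator measurableSet_Ici, integral_Ici_eq_integral_Ioi]

lemma jointTail_nonneg (η : ℝ) : 0 ≤ jointTail α β η := ENNReal.toReal_nonneg

lemma jointTail_le_gaussTail (η : ℝ) : jointTail α β η ≤ gaussTail η := by
  refine ENNReal.toReal_mono (measure_ne_top _ _) ?_
  calc _ ≤ (gaussianReal 0 1).prod (gaussianReal 0 1) (Ici η ×ˢ univ) :=
        measure_mono fun z hz ↦ ⟨hz.1, mem_univ _⟩
    _ = gaussianReal 0 1 (Ici η) := by rw [Measure.prod_prod, measure_univ, mul_one]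

/-- The integrand of `I(t)` after the substitution `x = u + t`. -/
def jointTailKernel (α β t u : ℝ) : ℝ := φ (u + t) * gaussTail (((1 - α) * t - α * u) / β)

def jointTailKernelDeriv (α β t u : ℝ) : ℝ :=
  -(u + t) * φ (u + t) * gaussTail (((1 - α) * t - α * u) / β)
    - φ (u + t) * φ (((1 - α) * t - α * u) / β) * ((1 - α) / β)

lemma continuous_jointTailKernel (t : ℝ) : Continuous (jointTailKernel α β t) :=
  (continuous_gaussianPDFReal_zero_one.comp (by fun_prop)).mul
    (continuous_gaussTail.comp (by fun_prop))

lemma continuous_jointTailKernelDeriv (t : ℝ) : Continuous (jointTailKernelDeriv α β t) := by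
  have := continuous_gaussianPDFReal_zero_one
  have := continuous_gaussTail
  unfold jointTailKernelDeriv
  fun_prop

lemma jointTail_eq_integral_jointTailKernel (hβ : 0 < β) (η : ℝ) :
    jointTail α β η = ∫ u in Ioi 0, jointTailKernel α β η u := by
  have h := setIntegral_Ioi_comp_add_right (fun x ↦ φ x * gaussTail ((η - α * x) / β)) 0 η
  rw [zero_add] at h
  rw [jointTail_eq_integral hβ, ← h]
  refine setIntegral_congr_fun measurableSet_Ioi fun u _ ↦ ?_
  simp only [jointTailKernel]
  ring_nf

lemma integrable_jointTailKernel (t : ℝ) : Integrable (jointTailKernel α β t) :=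
  ((integrable_gaussianPDFReal 0 1).comp_add_right t).mono'
    (continuous_jointTailKernel t).aestronglyMeasurable (ae_of_all _ fun u ↦ by
      rw [jointTailKernel, norm_mul, Real.norm_of_nonneg (gaussianPDFReal_nonneg 0 1 _),
        Real.norm_of_nonneg (gaussTail_nonneg _)]
      exact mul_le_of_le_one_right (gaussianPDFReal_nonneg 0 1 _) (gaussTail_le_one _))

lemma tendsto_jointTailKernel_atTop (t : ℝ) :
    Tendsto (jointTailKernel α β t) atTop (𝓝 0) :=
  squeeze_zero (fun _ ↦ mul_nonneg (gaussianPDFReal_nonneg 0 1 _) (gaussTail_nonneg _))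
    (fun _ ↦ mul_le_of_le_one_right (gaussianPDFReal_nonneg 0 1 _) (gaussTail_le_one _))
    (tendsto_gaussianPDFReal_zero_one_atTop.comp (tendsto_atTop_add_const_right _ t tendsto_id))

lemma hasDerivAt_jointTailKernel_fst (t u : ℝ) :
    HasDerivAt (jointTailKernel α β · u) (jointTailKernelDeriv α β t u) t := by
  have hf : HasDerivAt (fun s ↦ u + s) 1 t := (hasDerivAt_id t).const_add u
  have hg : HasDerivAt (fun s ↦ ((1 - α) * s - α * u) / β) ((1 - α) / β) t := by
    simpa using (((hasDerivAt_id t).const_mul (1 - α)).sub_const (α * u)).div_const β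
  exact (hf.gaussianPDFReal_mul_gaussTail hg).congr_deriv (by rw [jointTailKernelDeriv]; ring)

lemma hasDerivAt_jointTailKernel_snd (t u : ℝ) :
    HasDerivAt (jointTailKernel α β t)
      (jointTailKernelDeriv α β t u + φ (u + t) * φ (((1 - α) * t - α * u) / β) / β) u := by
  have hf : HasDerivAt (fun v ↦ v + t) 1 u := (hasDerivAt_id u).add_const t
  have hg : HasDerivAt (fun v ↦ ((1 - α) * t - α * v) / β) (-(α / β)) u := by
    simpa [neg_div] using (((hasDerivAt_id u).const_mul α).const_sub ((1 - α) * t)).div_const β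
  exact (hf.gaussianPDFReal_mul_gaussTail hg).congr_deriv (by rw [jointTailKernelDeriv]; ring)

lemma abs_jointTailKernelDeriv_le (t u : ℝ) :
    |jointTailKernelDeriv α β t u| ≤ (1 + |(1 - α) / β|) * exp (t ^ 2 / 4) * exp (-u ^ 2 / 8) := by
  set x := u + t
  set y := ((1 - α) * t - α * u) / β
  have hφx := gaussianPDFReal_nonneg 0 1 x
  have hφy : φ y ≤ 1 := (gaussianPDFReal_zero_one_le_exp y).trans (exp_le_one_iff.2 (by nlinarith))
  have hφx' : φ x ≤ exp (-x ^ 2 / 4) :=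
    (gaussianPDFReal_zero_one_le_exp x).trans (exp_le_exp.2 (by nlinarith))
  have hxφx : |x| * φ x ≤ exp (-x ^ 2 / 4) :=
    (mul_le_mul_of_nonneg_left (gaussianPDFReal_zero_one_le_exp x) (abs_nonneg x)).trans
      (abs_mul_exp_neg_sq_div_two_le x)
  calc _ ≤ |x| * φ x * gaussTail y + φ x * φ y * |(1 - α) / β| := by
        refine (abs_sub _ _).trans (le_of_eq ?_)
        rw [abs_mul, abs_mul, abs_mul, abs_mul, abs_neg, abs_of_nonneg hφx,
          abs_of_nonneg (gaussTail_nonneg y), abs_of_nonneg (gaussianPDFReal_nonneg 0 1 y)]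
    _ ≤ |x| * φ x * 1 + φ x * 1 * |(1 - α) / β| := by
        gcongr
        exact gaussTail_le_one y
    _ ≤ (1 + |(1 - α) / β|) * exp (-x ^ 2 / 4) := by
        nlinarith [abs_nonneg ((1 - α) / β)]
    _ ≤ _ := by
        rw [mul_assoc]
        exact mul_le_mul_of_nonneg_left (exp_neg_add_sq_div_four_le u t) (by positivity)

lemma integral_jointTailKernelDeriv (hβ : 0 < β) (hαβ : α ^ 2 + β ^ 2 = 1) (η : ℝ)
    (hint : IntegrableOn (jointTailKernelDeriv α β η) (Ioi 0)) :
    ∫ u in Ioi 0, jointTailKernelDeriv α β η u = -2 * φ η * gaussTail ((1 - α) * η / β) := by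
  have hprod := gaussianPDFReal_mul_gaussianPDFReal hβ.ne' hαβ η
  have hprod_int : Integrable fun u ↦ φ (u + η) * φ (((1 - α) * η - α * u) / β) := by
    simp_rw [hprod]
    exact (((integrable_gaussianPDFReal 0 1).comp_div hβ.ne').comp_add_right _).const_mul _
  have hprod_integral : ∫ u in Ioi 0, φ (u + η) * φ (((1 - α) * η - α * u) / β) / β
      = φ η * gaussTail ((1 - α) * η / β) := by
    simp_rw [hprod]
    rw [integral_div, integral_const_mul, setIntegral_Ioi_gaussianPDFReal_div hβ]
    field_simp
  have hftc := integral_Ioi_of_hasDerivAt_of_tendsto'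
    (fun u _ ↦ hasDerivAt_jointTailKernel_snd η u)
    (hint.add (hprod_int.integrableOn.div_const β)) (tendsto_jointTailKernel_atTop η)
  rw [integral_add hint (hprod_int.integrableOn.div_const β), hprod_integral, jointTailKernel]
    at hftc
  simp only [zero_add, mul_zero, sub_zero] at hftc
  linarith

lemma hasDerivAt_jointTail (hβ : 0 < β) (hαβ : α ^ 2 + β ^ 2 = 1) (η : ℝ) :
    HasDerivAt (jointTail α β) (-2 * φ η * gaussTail ((1 - α) * η / β)) η := by
  have hbound : Integrable fun u : ℝ ↦
      (1 + |(1 - α) / β|) * exp ((|η| + 1) ^ 2 / 4) * exp (-u ^ 2 / 8) := by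
    refine ((integrable_exp_neg_mul_sq (by norm_num : (0 : ℝ) < 1 / 8)).const_mul
      ((1 + |(1 - α) / β|) * exp ((|η| + 1) ^ 2 / 4))).congr (ae_of_all _ fun u ↦ ?_)
    ring_nf
  have hdominated : ∀ u, ∀ t ∈ Metric.ball η 1, ‖jointTailKernelDeriv α β t u‖
      ≤ (1 + |(1 - α) / β|) * exp ((|η| + 1) ^ 2 / 4) * exp (-u ^ 2 / 8) := by
    intro u t ht
    refine (abs_jointTailKernelDeriv_le t u).trans ?_
    rw [Metric.mem_ball, Real.dist_eq] at ht
    have ht' : t ^ 2 ≤ (|η| + 1) ^ 2 := by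
      rw [← sq_abs t]
      gcongr
      linarith [abs_sub_abs_le_abs_sub t η]
    gcongr
  obtain ⟨hint, hderiv⟩ := hasDerivAt_integral_of_dominated_loc_of_deriv_le
    (Metric.ball_mem_nhds η one_pos)
    (.of_forall fun t ↦ (continuous_jointTailKernel t).aestronglyMeasurable)
    (integrable_jointTailKernel η).integrableOn
    (continuous_jointTailKernelDeriv η).aestronglyMeasurable
    (ae_of_all _ hdominated) hbound.integrableOn
    (ae_of_all _ fun u t _ ↦ hasDerivAt_jointTailKernel_fst t u)
  rw [funext (jointTail_eq_integral_jointTailKernel hβ)]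
  rwa [integral_jointTailKernelDeriv hβ hαβ η hint] at hderiv

lemma hasDerivAt_omegaFn (hβ : 0 < β) (hαβ : α ^ 2 + β ^ 2 = 1) (η : ℝ) :
    HasDerivAt (OmegaFn α β)
      (-(2 * α * (1 - α) ^ 2 / β ^ 3) * exp (α * (1 - α) / β ^ 2 * η ^ 2)
        * (gaussTail η) ^ 2 * η) η := by
  have hlin : HasDerivAt (fun t ↦ (1 - α) * t / β) ((1 - α) / β) η := by
    simpa using ((hasDerivAt_id η).const_mul (1 - α)).div_const β
  have hquad : HasDerivAt (fun t ↦ α * (1 - α) / β ^ 2 * t ^ 2)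
      (α * (1 - α) / β ^ 2 * (2 * η)) η := by
    simpa using (hasDerivAt_pow 2 η).const_mul (α * (1 - α) / β ^ 2)
  have h := ((((hasDerivAt_gaussTail η).const_mul 2).mul
    ((hasDerivAt_gaussTail _).comp η hlin)).sub (hasDerivAt_jointTail hβ hαβ η)).sub
    ((hquad.exp.const_mul ((1 - α) / β)).mul ((hasDerivAt_gaussTail η).pow 2))
  refine h.congr_deriv ?_
  simp only [Function.comp_apply, Pi.pow_apply]
  rw [← exp_mul_gaussianPDFReal hβ.ne' hαβ]
  field_simp
  ring

lemma tendsto_omegaFn_atTop (hα : α < 1) (hβ : 0 < β) (hαβ : α ^ 2 + β ^ 2 = 1) :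
    Tendsto (OmegaFn α β) atTop (𝓝 0) := by
  have hlin : Tendsto (fun η ↦ (1 - α) * η / β) atTop atTop :=
    (tendsto_id.const_mul_atTop (by linarith)).atTop_div_const hβ
  have hjoint : Tendsto (jointTail α β) atTop (𝓝 0) :=
    squeeze_zero jointTail_nonneg jointTail_le_gaussTail tendsto_gaussTail_atTop
  have hexp_tail : Tendsto (fun η ↦ exp (α * (1 - α) / β ^ 2 * η ^ 2) * gaussTail η ^ 2)
      atTop (𝓝 0) := by
    have hk : (α - 1) / β ^ 2 < 0 := div_neg_of_neg_of_pos (by linarith) (by positivity)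
    refine squeeze_zero' (.of_forall fun η ↦ by positivity)
      (eventually_atTop.2 ⟨0, fun η hη ↦ ?_⟩)
      (tendsto_exp_atBot.comp ((tendsto_pow_atTop two_ne_zero).const_mul_atTop_of_neg hk))
    calc exp (α * (1 - α) / β ^ 2 * η ^ 2) * gaussTail η ^ 2
        ≤ exp (α * (1 - α) / β ^ 2 * η ^ 2) * exp (-η ^ 2 / 2) ^ 2 := by
          gcongr
          · exact gaussTail_nonneg η
          · exact gaussTail_le_exp hη
      _ = exp ((α - 1) / β ^ 2 * η ^ 2) := by
          rw [← exp_nat_mul, ← exp_add]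
          congr 1
          field_simp
          linear_combination (-2 * η ^ 2) * hαβ
  have h := ((tendsto_gaussTail_atTop.const_mul 2).mul (tendsto_gaussTail_atTop.comp hlin)).sub
    hjoint |>.sub (hexp_tail.const_mul ((1 - α) / β))
  simp only [mul_zero, sub_zero] at h
  refine h.congr fun η ↦ ?_
  simp only [OmegaFn, Function.comp_apply]
  ring

end

/-- For `0 < τ < √2`, `α = 1 - τ²/2`, `β = √(τ² - τ⁴/4)`:
`Ω′(η) = -(2α(1-α)²/β³) e^{(α(1-α)/β²)η²} Φ_c(η)² η ≤ 0` for all `η ≥ 0`,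
`Ω(η) → 0` as `η → ∞`, and consequently `Ω(η) ≥ 0` for all `η ≥ 0`. -/
theorem omega_nonneg (τ α β : ℝ) (hτ0 : 0 < τ) (hτ : τ < Real.sqrt 2)
    (hα : α = 1 - τ ^ 2 / 2) (hβ : β = Real.sqrt (τ ^ 2 - τ ^ 4 / 4)) :
    (∀ η : ℝ, 0 ≤ η →
        HasDerivAt (OmegaFn α β)
          (-(2 * α * (1 - α) ^ 2 / β ^ 3) * Real.exp (α * (1 - α) / β ^ 2 * η ^ 2)
            * (gaussTail η) ^ 2 * η) η ∧
        -(2 * α * (1 - α) ^ 2 / β ^ 3) * Real.exp (α * (1 - α) / β ^ 2 * η ^ 2)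
            * (gaussTail η) ^ 2 * η ≤ 0) ∧
      Tendsto (OmegaFn α β) atTop (nhds 0) ∧
      ∀ η : ℝ, 0 ≤ η → 0 ≤ OmegaFn α β η := by
  have hτ2 : τ ^ 2 < 2 := by nlinarith [sq_sqrt (zero_le_two : (0 : ℝ) ≤ 2), sqrt_nonneg 2]
  have hα0 : 0 ≤ α := by rw [hα]; linarith
  have hα1 : α < 1 := by rw [hα]; nlinarith
  have hβsq : 0 < τ ^ 2 - τ ^ 4 / 4 := by nlinarith
  have hβ0 : 0 < β := hβ ▸ sqrt_pos.2 hβsq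
  have hαβ : α ^ 2 + β ^ 2 = 1 := by rw [hα, hβ, sq_sqrt hβsq.le]; ring
  have hderiv : ∀ η : ℝ, 0 ≤ η →
      -(2 * α * (1 - α) ^ 2 / β ^ 3) * exp (α * (1 - α) / β ^ 2 * η ^ 2)
        * (gaussTail η) ^ 2 * η ≤ 0 := fun η hη ↦ by
    have : 0 ≤ 2 * α * (1 - α) ^ 2 / β ^ 3 * exp (α * (1 - α) / β ^ 2 * η ^ 2)
        * (gaussTail η) ^ 2 * η := by positivity
    linarith
  have hlim := tendsto_omegaFn_atTop hα1 hβ0 hαβ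
  exact ⟨fun η hη ↦ ⟨hasDerivAt_omegaFn hβ0 hαβ η, hderiv η hη⟩, hlim, fun η hη ↦
    le_of_hasDerivAt_nonpos_of_tendsto (fun x _ ↦ hasDerivAt_omegaFn hβ0 hαβ x)
      (fun x hx ↦ hderiv x (hη.trans hx)) hlim⟩
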